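/- Let G be a group acting by homeomorphisms on an R-tree T with non-nesting action, and let g, h ∈ G be elliptic elements with Fix(g) ∩ Fix(h) = ∅. Then the commutator g⁻¹h⁻¹gh is hyperbolic. -/

import Mathlib

open Set

section TreeDefs

/-- `A` is an arc from `a` to `b`: a homeomorphic image of `[0,1]` with endpoints `a,b`. -/
def ArcFrom {T : Type*} [TopologicalSpace T] (a b : T) (A : Set T) : Prop :=
  ∃ f : ℝ → T, ContinuousOn f (Set.Icc 0 1) ∧ Set.InjOn f (Set.Icc 0 1) ∧
    f 0 = a ∧ f 1 = b ∧ f '' Set.Icc 0 1 = A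

/-- `T` is uniquely arcwise connected: any two distinct points are joined by a
unique arc. Together with metrizability this is the definition of an `ℝ`-tree. -/
def IsRTree (T : Type*) [TopologicalSpace T] : Prop :=
  ∀ a b : T, a ≠ b →
    (∃ A : Set T, ArcFrom a b A) ∧
    ∀ A A' : Set T, ArcFrom a b A → ArcFrom a b A' → A = A'

/-- The action is non-nesting: no group element maps a closed arc properly into itself. -/
def NonNesting (G T : Type*) [TopologicalSpace T] [Group G] [MulAction G T] : Prop :=
  ∀ (g : G) (a b : T) (A : Set T), ArcFrom a b A → ¬((fun x => g • x) '' A ⊂ A)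

/-- A ray: a subspace homeomorphic to `[0,∞)`. -/
def IsRay {T : Type*} [TopologicalSpace T] (R : Set T) : Prop :=
  Nonempty (↥R ≃ₜ ↥(Set.Ici (0 : ℝ)))

end TreeDefs

/-!
Write `[a, b]` for the arc from `a` to `b`. If `e` fixes `p` and sends a point `c` of `[p, q]`
to another point of `[p, q]`, then one of `e [p, c] = [p, e c]` and `[p, c]` properly contains
the other, so `e` or `e⁻¹` nests. Hence fixed sets are convex, an elliptic `e` fixes a point of
`[z, e z]` for every `z`, and the bridge `[p, q]` from `Fix a` to `Fix b`, for elliptics `a`, `b`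
with disjoint fixed sets, satisfies `a [p, q] ∩ [p, q] = {p}` and `b [p, q] ∩ [p, q] = {q}`.
A fixed point `m` of `a b` on `[q, a b q] = [q, p] ∪ a [p, q]` would give a common point `w`
of `a⁻¹ [p, q]` and `b [p, q]` (namely `b m`) or of `a [p, q]` and `b⁻¹ [p, q]` (namely `m`);
but then `[p, q] ⊆ [p, w] ∪ [w, q]` lies in the union of the two translates, which meets
`[p, q]` only in `{p, q}`. The commutator is the product of `g⁻¹` and `h⁻¹ g h`, whose fixed
sets `Fix g` and `h⁻¹ Fix g` are disjoint because `h` fixes a point of `[z, h z]` and `Fix g`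
is convex.
-/

open Pointwise MulAction

namespace ArcFrom

variable {T : Type*} [TopologicalSpace T] {a b m : T} {A B : Set T}

theorem ne (h : ArcFrom a b A) : a ≠ b := by
  obtain ⟨f, -, hinj, rfl, rfl, -⟩ := h
  exact fun h01 =>
    zero_ne_one (hinj (left_mem_Icc.2 zero_le_one) (right_mem_Icc.2 zero_le_one) h01)

theorem left_mem (h : ArcFrom a b A) : a ∈ A := by
  obtain ⟨f, -, -, rfl, -, rfl⟩ := h
  exact mem_image_of_mem f (left_mem_Icc.2 zero_le_one)

theorem right_mem (h : ArcFrom a b A) : b ∈ A := by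
  obtain ⟨f, -, -, -, rfl, rfl⟩ := h
  exact mem_image_of_mem f (right_mem_Icc.2 zero_le_one)

theorem of_Icc {f : ℝ → T} {s t : ℝ} (hst : s < t) (hc : ContinuousOn f (Icc s t))
    (hinj : InjOn f (Icc s t)) : ArcFrom (f s) (f t) (f '' Icc s t) := by
  have hφ : (fun x => (t - s) * x + s) '' Icc 0 1 = Icc s t := by
    simp [image_affine_Icc' (sub_pos.2 hst)]
  have hmaps : MapsTo (fun x => (t - s) * x + s) (Icc 0 1) (Icc s t) :=
    (mapsTo_image _ _).mono_right hφ.subset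
  refine ⟨f ∘ fun x => (t - s) * x + s, hc.comp (by fun_prop) hmaps,
    hinj.comp ((add_left_injective s).comp (mul_right_injective₀ (sub_pos.2 hst).ne')).injOn
      hmaps, by simp, by simp, by rw [image_comp, hφ]⟩

theorem symm (h : ArcFrom a b A) : ArcFrom b a A := by
  obtain ⟨f, hc, hinj, rfl, rfl, rfl⟩ := h
  have hφ : (fun x : ℝ => 1 - x) '' Icc 0 1 = Icc 0 1 := by simp
  have hmaps : MapsTo (fun x : ℝ => 1 - x) (Icc 0 1) (Icc 0 1) :=
    (mapsTo_image _ _).mono_right hφ.subset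
  exact ⟨f ∘ fun x => 1 - x, hc.comp (by fun_prop) hmaps,
    hinj.comp sub_right_injective.injOn hmaps, by simp, by simp, by rw [image_comp, hφ]⟩

theorem image {T' : Type*} [TopologicalSpace T'] {φ : T → T'} (h : ArcFrom a b A)
    (hφ : Continuous φ) (hinj : φ.Injective) : ArcFrom (φ a) (φ b) (φ '' A) := by
  obtain ⟨f, hc, hf, rfl, rfl, rfl⟩ := h
  exact ⟨φ ∘ f, hφ.comp_continuousOn hc, hinj.comp_injOn hf, rfl, rfl, image_comp φ f _⟩

theorem smul {G : Type*} [Group G] [MulAction G T] [ContinuousConstSMul G T]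
    (h : ArcFrom a b A) (e : G) : ArcFrom (e • a) (e • b) (e • A) :=
  h.image (continuous_const_smul e) (MulAction.injective e)

theorem union (h₁ : ArcFrom a m A) (h₂ : ArcFrom m b B) (hAB : A ∩ B ⊆ {m}) :
    ArcFrom a b (A ∪ B) := by
  obtain ⟨f₁, hc₁, hi₁, rfl, rfl, rfl⟩ := h₁
  obtain ⟨f₂, hc₂, hi₂, hm, rfl, rfl⟩ := h₂
  classical
  let F : ℝ → T := fun t => if t ≤ 1 then f₁ t else f₂ (t - 1)
  have hF₁ : EqOn F f₁ (Icc 0 1) := fun t ht => if_pos ht.2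
  have hF₂ : EqOn F (f₂ ∘ (· - 1)) (Icc 1 2) := by
    intro t ht
    rcases ht.1.eq_or_lt with rfl | h
    · simp [F, hm]
    · exact if_neg h.not_ge
  have hshift : (· - 1) '' Icc (1 : ℝ) 2 = Icc 0 1 := by norm_num
  have hmaps : MapsTo (· - 1) (Icc (1 : ℝ) 2) (Icc 0 1) :=
    (mapsTo_image _ _).mono_right hshift.subset
  have hsplit : Icc (0 : ℝ) 2 = Icc 0 1 ∪ Icc 1 2 :=
    (Icc_union_Icc_eq_Icc zero_le_one one_le_two).symm
  have hc : ContinuousOn F (Icc 0 2) := by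
    rw [hsplit]
    exact (hc₁.congr hF₁).union_of_isClosed
      ((hc₂.comp (continuous_sub_right 1).continuousOn hmaps).congr hF₂)
      isClosed_Icc isClosed_Icc
  have hinj : InjOn F (Icc 0 2) := by
    rw [← Icc_union_Ioc_eq_Icc zero_le_one one_le_two,
      injOn_union ((Iic_disjoint_Ioc le_rfl).mono_left Icc_subset_Iic_self)]
    refine ⟨hi₁.congr hF₁.symm,
      ((hi₂.comp sub_left_injective.injOn hmaps).congr hF₂.symm).mono Ioc_subset_Icc_self,
      ?_⟩
    intro s hs t ht hst
    have hFt : F t = f₂ (t - 1) := hF₂ (Ioc_subset_Icc_self ht)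
    have hm' : F t = f₁ 1 := hAB ⟨hst ▸ hF₁ hs ▸ mem_image_of_mem f₁ hs,
      hFt ▸ mem_image_of_mem f₂ (hmaps (Ioc_subset_Icc_self ht))⟩
    have := hi₂ (hmaps (Ioc_subset_Icc_self ht)) (left_mem_Icc.2 zero_le_one)
      (by rw [← hFt, hm', hm])
    linarith [ht.1]
  have hF0 : F 0 = f₁ 0 := hF₁ (left_mem_Icc.2 zero_le_one)
  have hF2 : F 2 = f₂ 1 := by norm_num [hF₂ (right_mem_Icc.2 one_le_two)]
  have himg : F '' Icc 0 2 = f₁ '' Icc 0 1 ∪ f₂ '' Icc 0 1 := by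
    rw [hsplit, image_union, hF₁.image_eq, hF₂.image_eq, image_comp, hshift]
  simpa only [hF0, hF2, himg] using of_Icc two_pos hc hinj

end ArcFrom

theorem isClosed_fixedBy {T G : Type*} [TopologicalSpace T] [T2Space T] [Group G] [MulAction G T]
    [ContinuousConstSMul G T] (e : G) : IsClosed (fixedBy T e) :=
  isClosed_eq (continuous_const_smul e) continuous_id

namespace RTree

variable {T : Type*} [TopologicalSpace T] {a b c d p q : T} {A : Set T}

/-- The arc from `a` to `b` when `T` is an `ℝ`-tree, and `{a}` when `a = b`. -/
def arc (a b : T) : Set T := insert a (⋃₀ {A | ArcFrom a b A})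

theorem arc_self (a : T) : arc a a = {a} := by
  have : {A : Set T | ArcFrom a a A} = ∅ := eq_empty_of_forall_notMem fun A h => h.ne rfl
  simp [arc, this]

theorem left_mem_arc (a b : T) : a ∈ arc a b := mem_insert a _

theorem arc_eq (hRT : IsRTree T) (h : ArcFrom a b A) : arc a b = A := by
  have : {A' : Set T | ArcFrom a b A'} = {A} :=
    eq_singleton_iff_unique_mem.2 ⟨h, fun A' h' => (hRT a b h.ne).2 A' A h' h⟩
  simp [arc, this, insert_eq_of_mem h.left_mem]

theorem arcFrom_arc (hRT : IsRTree T) (hab : a ≠ b) : ArcFrom a b (arc a b) := by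
  obtain ⟨A, hA⟩ := (hRT a b hab).1
  rwa [arc_eq hRT hA]

theorem right_mem_arc (hRT : IsRTree T) (a b : T) : b ∈ arc a b := by
  rcases eq_or_ne a b with rfl | hab
  · exact left_mem_arc a a
  · exact (arcFrom_arc hRT hab).right_mem

theorem arc_comm (hRT : IsRTree T) (a b : T) : arc a b = arc b a := by
  rcases eq_or_ne a b with rfl | hab
  · rfl
  · exact arc_eq hRT (arcFrom_arc hRT hab.symm).symm

theorem smul_arc (hRT : IsRTree T) {G : Type*} [Group G] [MulAction G T]
    [ContinuousConstSMul G T] (e : G) (a b : T) : e • arc a b = arc (e • a) (e • b) := by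
  rcases eq_or_ne a b with rfl | hab
  · simp [arc_self]
  · exact (arc_eq hRT ((arcFrom_arc hRT hab).smul e)).symm

theorem isClosed_arc [T2Space T] (hRT : IsRTree T) (a b : T) : IsClosed (arc a b) := by
  rcases eq_or_ne a b with rfl | hab
  · simp [arc_self]
  · obtain ⟨f, hc, -, -, -, hf⟩ := arcFrom_arc hRT hab
    exact hf ▸ (isCompact_Icc.image_of_continuousOn hc).isClosed

theorem exists_arc_parametrization (hRT : IsRTree T) (hab : a ≠ b) :
    ∃ f : ℝ → T, ContinuousOn f (Icc 0 1) ∧ InjOn f (Icc 0 1) ∧ f 0 = a ∧ f 1 = b ∧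
      ∀ s t, 0 ≤ s → s ≤ t → t ≤ 1 → f '' Icc s t = arc (f s) (f t) := by
  obtain ⟨f, hc, hinj, h0, h1, -⟩ := arcFrom_arc hRT hab
  refine ⟨f, hc, hinj, h0, h1, fun s t hs hst ht => ?_⟩
  rcases hst.eq_or_lt with rfl | hlt
  · simp [arc_self]
  · exact (arc_eq hRT (.of_Icc hlt (hc.mono (Icc_subset_Icc hs ht))
      (hinj.mono (Icc_subset_Icc hs ht)))).symm

theorem arc_subset_of_mem (hRT : IsRTree T) (hc : c ∈ arc a b) (hd : d ∈ arc a b) :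
    arc c d ⊆ arc a b := by
  rcases eq_or_ne a b with rfl | hab
  · simp_all [arc_self]
  obtain ⟨f, -, -, rfl, rfl, hf⟩ := exists_arc_parametrization hRT hab
  rw [← hf 0 1 le_rfl zero_le_one le_rfl] at hc hd ⊢
  obtain ⟨r, hr, rfl⟩ := hc
  obtain ⟨r', hr', rfl⟩ := hd
  wlog hrr : r ≤ r' generalizing r r'
  · rw [arc_comm hRT]
    exact this r' hr' r hr (le_of_not_ge hrr)
  rw [← hf r r' hr.1 hrr hr'.2]
  exact image_mono (Icc_subset_Icc hr.1 hr'.2)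

theorem arc_ssubset_or (hRT : IsRTree T) (hc : c ∈ arc p q) (hd : d ∈ arc p q) (hcd : c ≠ d) :
    arc p c ⊂ arc p d ∨ arc p d ⊂ arc p c := by
  rcases eq_or_ne p q with rfl | hpq
  · simp_all [arc_self]
  obtain ⟨f, -, hinj, rfl, rfl, hf⟩ := exists_arc_parametrization hRT hpq
  rw [← hf 0 1 le_rfl zero_le_one le_rfl] at hc hd
  obtain ⟨r, hr, rfl⟩ := hc
  obtain ⟨r', hr', rfl⟩ := hd
  wlog hrr : r < r' generalizing r r'
  · exact (this r' hr' r hr hcd.symm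
      ((not_lt.1 hrr).lt_of_ne fun h => hcd (congrArg f h.symm))).symm
  left
  rw [← hf 0 r le_rfl hr.1 hr.2, ← hf 0 r' le_rfl hr'.1 hr'.2,
    ssubset_iff_of_subset (image_mono (Icc_subset_Icc_right hrr.le))]
  refine ⟨f r', mem_image_of_mem f ⟨hr'.1, le_rfl⟩, ?_⟩
  rintro ⟨t, ht, he⟩
  have := hinj (Icc_subset_Icc_right hr.2 ht) hr' he
  linarith [ht.2]

theorem exists_mem_arc_ne (hRT : IsRTree T) (hpq : p ≠ q) :
    ∃ c ∈ arc p q, c ≠ p ∧ c ≠ q := by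
  obtain ⟨f, -, hinj, rfl, rfl, hf⟩ := arcFrom_arc hRT hpq
  have hmem : (1 / 2 : ℝ) ∈ Icc 0 1 := by norm_num
  refine ⟨f (1 / 2), hf ▸ mem_image_of_mem f hmem, fun h => ?_, fun h => ?_⟩
  · have := hinj hmem (left_mem_Icc.2 zero_le_one) h
    norm_num at this
  · have := hinj hmem (right_mem_Icc.2 zero_le_one) h
    norm_num at this

theorem exists_last_mem (hRT : IsRTree T) {C : Set T} (hC : IsClosed C) (ha : a ∈ C) (b : T) :
    ∃ m ∈ arc a b, m ∈ C ∧ arc m b ∩ C ⊆ {m} := by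
  rcases eq_or_ne a b with rfl | hab
  · exact ⟨a, left_mem_arc a a, ha, by simp [arc_self]⟩
  obtain ⟨f, hc, -, rfl, rfl, hf⟩ := exists_arc_parametrization hRT hab
  set W := Icc 0 1 ∩ f ⁻¹' C
  have hWbdd : BddAbove W := bddAbove_Icc.mono inter_subset_left
  have hrW : sSup W ∈ W := (hc.preimage_isClosed_of_isClosed isClosed_Icc hC).csSup_mem
    ⟨0, left_mem_Icc.2 zero_le_one, ha⟩ hWbdd
  set r := sSup W
  refine ⟨f r, ?_, hrW.2, ?_⟩
  · rw [← hf 0 1 le_rfl zero_le_one le_rfl]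
    exact mem_image_of_mem f hrW.1
  · rintro _ ⟨hx, hxC⟩
    rw [← hf r 1 hrW.1.1 hrW.1.2 le_rfl] at hx
    obtain ⟨t, ht, rfl⟩ := hx
    have : t ≤ r := le_csSup hWbdd ⟨⟨hrW.1.1.trans ht.1, ht.2⟩, hxC⟩
    rw [le_antisymm this ht.1]
    rfl

theorem arc_eq_union_of_inter_subset (hRT : IsRTree T) {m : T} (h : arc a m ∩ arc m b ⊆ {m}) :
    arc a b = arc a m ∪ arc m b := by
  rcases eq_or_ne a m with rfl | ham
  · rw [arc_self, singleton_union, insert_eq_of_mem (left_mem_arc a b)]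
  rcases eq_or_ne m b with rfl | hmb
  · rw [arc_self, union_singleton, insert_eq_of_mem (right_mem_arc hRT a m)]
  exact arc_eq hRT ((arcFrom_arc hRT ham).union (arcFrom_arc hRT hmb) h)

theorem arc_subset_union [T2Space T] (hRT : IsRTree T) (p q w : T) :
    arc p q ⊆ arc p w ∪ arc w q := by
  obtain ⟨m, -, hmw, hlast⟩ := exists_last_mem hRT (isClosed_arc hRT p w) (left_mem_arc p w) q
  have hpm : arc p m ⊆ arc p w := arc_subset_of_mem hRT (left_mem_arc p w) hmw
  have hwm : arc w m ⊆ arc p w := arc_subset_of_mem hRT (right_mem_arc hRT p w) hmw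
  have hm : m ∈ arc w q := by
    rw [arc_eq_union_of_inter_subset hRT fun x hx => hlast ⟨hx.2, hwm hx.1⟩]
    exact Or.inl (right_mem_arc hRT w m)
  rw [arc_eq_union_of_inter_subset hRT fun x hx => hlast ⟨hx.2, hpm hx.1⟩]
  exact union_subset_union hpm (arc_subset_of_mem hRT hm (right_mem_arc hRT w q))

theorem exists_bridge (hRT : IsRTree T) {A B : Set T} (hA : IsClosed A) (hB : IsClosed B)
    (ha : a ∈ A) (hb : b ∈ B) :
    ∃ p ∈ A, ∃ q ∈ B, arc p q ∩ A ⊆ {p} ∧ arc p q ∩ B ⊆ {q} := by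
  obtain ⟨p, -, hpA, hp⟩ := exists_last_mem hRT hA ha b
  obtain ⟨q, hq, hqB, hq'⟩ := exists_last_mem hRT hB hb p
  have hsub : arc p q ⊆ arc p b :=
    arc_subset_of_mem hRT (left_mem_arc p b) (arc_comm hRT b p ▸ hq)
  exact ⟨p, hpA, q, hqB, fun x hx => hp ⟨hsub hx.1, hx.2⟩, arc_comm hRT p q ▸ hq'⟩

section Action

variable {G : Type*} [Group G] [MulAction G T]

theorem not_smul_arc_ssubset (hRT : IsRTree T) (hnn : NonNesting G T) (e : G) (a b : T) :
    ¬e • arc a b ⊂ arc a b := by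
  rcases eq_or_ne a b with rfl | hab
  · simp [arc_self, ssubset_singleton_iff]
  · exact hnn e a b _ (arcFrom_arc hRT hab)

variable [ContinuousConstSMul G T]

theorem disjoint_smul_arc [T2Space T] (hRT : IsRTree T) {α β : G}
    (hpq : p ≠ q) (hp : α • p = p) (hq : β • q = q)
    (hα : α • arc p q ∩ arc p q ⊆ {p}) (hβ : β • arc p q ∩ arc p q ⊆ {q}) :
    Disjoint (α • arc p q) (β • arc p q) := by
  rw [Set.disjoint_left]
  intro w hwα hwβ
  obtain ⟨c, hc, hcp, hcq⟩ := exists_mem_arc_ne hRT hpq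
  rw [smul_arc hRT, hp] at hα hwα
  rw [smul_arc hRT, hq] at hβ hwβ
  rcases arc_subset_union hRT p q w hc with h | h
  · exact hcp (hα ⟨arc_subset_of_mem hRT (left_mem_arc p _) hwα h, hc⟩)
  · exact hcq (hβ ⟨arc_subset_of_mem hRT hwβ (right_mem_arc hRT _ q) h, hc⟩)

theorem smul_eq_self_of_mem_arc (hRT : IsRTree T) (hnn : NonNesting G T) {e : G}
    (hp : e • p = p) (hc : c ∈ arc p q) (hec : e • c ∈ arc p q) : e • c = c := by
  by_contra hne
  rcases arc_ssubset_or hRT hc hec (Ne.symm hne) with h | h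
  · apply not_smul_arc_ssubset hRT hnn e⁻¹ p (e • c)
    rwa [smul_arc hRT, inv_smul_smul, inv_smul_eq_iff.2 hp.symm]
  · apply not_smul_arc_ssubset hRT hnn e p c
    rwa [smul_arc hRT, hp]

theorem arc_subset_fixedBy (hRT : IsRTree T) (hnn : NonNesting G T) {e : G}
    (ha : a ∈ fixedBy T e) (hb : b ∈ fixedBy T e) : arc a b ⊆ fixedBy T e := by
  intro c hc
  have hec : e • c ∈ e • arc a b := smul_mem_smul_set hc
  rw [smul_arc hRT, mem_fixedBy.1 ha, mem_fixedBy.1 hb] at hec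
  exact smul_eq_self_of_mem_arc hRT hnn ha hc hec

theorem smul_arc_inter_arc_subset (hRT : IsRTree T) (hnn : NonNesting G T) {e : G}
    (hp : e • p = p) (hfix : arc p q ∩ fixedBy T e ⊆ {p}) :
    e • arc p q ∩ arc p q ⊆ {p} := by
  rintro _ ⟨⟨c, hc, rfl⟩, hec⟩
  have hfc : e • c = c := smul_eq_self_of_mem_arc hRT hnn hp hc hec
  show e • c ∈ {p}
  rw [hfc]
  exact hfix ⟨hc, hfc⟩

theorem exists_fixed_mem_arc_smul [T2Space T] (hRT : IsRTree T) (hnn : NonNesting G T) {e : G}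
    {x : T} (hx : e • x = x) (z : T) : ∃ m ∈ arc z (e • z), e • m = m := by
  obtain ⟨m, hmz, hm, hlast⟩ :=
    exists_last_mem hRT (isClosed_arc hRT x (e • z)) (left_mem_arc x (e • z)) z
  have hem : e • m ∈ arc x (e • z) := by
    rw [← hx, ← smul_arc hRT]
    exact smul_mem_smul_set hmz
  refine ⟨m, ?_, smul_eq_self_of_mem_arc hRT hnn hx hm hem⟩
  have hmz' : arc m (e • z) ⊆ arc x (e • z) :=
    arc_subset_of_mem hRT hm (right_mem_arc hRT x (e • z))
  rw [arc_eq_union_of_inter_subset hRT fun y hy => hlast ⟨arc_comm hRT z m ▸ hy.1, hmz' hy.2⟩]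
  exact Or.inl (right_mem_arc hRT z m)

theorem disjoint_fixedBy_conj [T2Space T] (hRT : IsRTree T) (hnn : NonNesting G T) {g h : G}
    (hdisj : Disjoint (fixedBy T g) (fixedBy T h)) (hh : ∃ x : T, h • x = x) :
    Disjoint (fixedBy T g) (fixedBy T (h⁻¹ * g * h)) := by
  rw [Set.disjoint_left]
  intro z hgz hghz
  obtain ⟨x, hx⟩ := hh
  rw [mem_fixedBy, mul_smul, mul_smul, inv_smul_eq_iff] at hghz
  obtain ⟨m, hm, hhm⟩ := exists_fixed_mem_arc_smul hRT hnn hx z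
  exact Set.disjoint_left.1 hdisj (arc_subset_fixedBy hRT hnn hgz hghz hm) hhm

theorem not_exists_fixed_mul [T2Space T] (hRT : IsRTree T) (hnn : NonNesting G T) {a b : G}
    {x y : T} (hx : a • x = x) (hy : b • y = y) (hdisj : Disjoint (fixedBy T a) (fixedBy T b)) :
    ¬∃ z : T, (a * b) • z = z := by
  rintro ⟨z, hz⟩
  obtain ⟨p, hpa, q, hqb, hpB, hqB⟩ :=
    exists_bridge hRT (isClosed_fixedBy a) (isClosed_fixedBy b) hx hy
  have hpq : p ≠ q := hdisj.ne_of_mem hpa hqb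
  have hpa' : a⁻¹ • p = p := inv_smul_eq_iff.2 hpa.symm
  have hqb' : b⁻¹ • q = q := inv_smul_eq_iff.2 hqb.symm
  rw [arc_comm hRT] at hqB
  have ha := smul_arc_inter_arc_subset hRT hnn hpa hpB
  have ha' := smul_arc_inter_arc_subset hRT hnn hpa' (by rwa [fixedBy_inv])
  have hb := smul_arc_inter_arc_subset hRT hnn hqb hqB
  have hb' := smul_arc_inter_arc_subset hRT hnn hqb' (by rwa [fixedBy_inv])
  rw [← arc_comm hRT] at hb hb'
  obtain ⟨m, hm, hmfix⟩ := exists_fixed_mem_arc_smul hRT hnn hz q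
  have hbm : b • m = a⁻¹ • m := by rw [eq_inv_smul_iff, ← mul_smul, hmfix]
  have haB : arc p (a • q) = a • arc p q := by rw [smul_arc hRT, hpa]
  rw [mul_smul, hqb, arc_eq_union_of_inter_subset hRT (m := p) (by
    rwa [arc_comm hRT q p, haB, inter_comm]), arc_comm hRT q p, haB] at hm
  rcases hm with hm | hm
  · exact (disjoint_smul_arc hRT hpq hpa' hqb ha' hb).ne_of_mem (smul_mem_smul_set hm)
      (smul_mem_smul_set hm) hbm.symm
  · refine (disjoint_smul_arc hRT hpq hpa hqb' ha hb').ne_of_mem hm ?_ rfl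
    rw [mem_smul_set_iff_inv_smul_mem, inv_inv, hbm]
    exact mem_smul_set_iff_inv_smul_mem.1 hm

end Action

end RTree

theorem stmt19 {T G : Type*} [MetricSpace T] [Group G] [MulAction G T]
    (hRT : IsRTree T) (hcont : ∀ g : G, Continuous fun x : T => g • x)
    (hnn : NonNesting G T) (g h : G)
    (hg : ∃ x : T, g • x = x) (hh : ∃ x : T, h • x = x)
    (hdisj : {x : T | g • x = x} ∩ {x : T | h • x = x} = ∅) :
    ¬∃ x : T, (g⁻¹ * h⁻¹ * g * h) • x = x := by
  have : ContinuousConstSMul G T := ⟨hcont⟩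
  obtain ⟨x, hx⟩ := hg
  have hconj : Disjoint (fixedBy T g⁻¹) (fixedBy T (h⁻¹ * g * h)) := by
    rw [fixedBy_inv]
    exact RTree.disjoint_fixedBy_conj hRT hnn (disjoint_iff_inter_eq_empty.2 hdisj) hh
  simpa only [mul_assoc] using RTree.not_exists_fixed_mul hRT hnn (inv_smul_eq_iff.2 hx.symm)
    (y := h⁻¹ • x) (by simp [mul_smul, hx]) hconj
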